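/- Let θ(z) = θ[1/2,1/2](z,τ), n ≥ 1, η ∈ ℂ. Suppose for each discrete time a, positions λ_k(a) and momenta t_k(a) (k = 1,…,n) satisfy the Bäcklund relations: t_k(a) = e^{c(a)}·∏_s θ(λ_k(a) − λ_s(a+1) + η/n)/θ(λ_k(a) − λ_s(a+1)) and t_k(a+1) = e^{c(a)}·∏_{m≠k} θ(λ_m(a+1) − λ_k(a+1) − η/n)/θ(λ_m(a+1) − λ_k(a+1) + η/n) · ∏_s θ(λ_s(a) − λ_k(a+1) + η/n)/θ(λ_s(a) − λ_k(a+1)), with all theta values appearing in denominators nonzero. Then the positions satisfy the discrete-time Ruijsenaars–Schneider equation: e^{c(a)−c(a−1)}·∏_{m≠k} θ(λ_m(a)−λ_k(a)+η/n)/θ(λ_m(a)−λ_k(a)−η/n) = ∏_s [θ(λ_k(a)−λ_s(a+1))/θ(λ_k(a)−λ_s(a+1)+η/n)]·[θ(λ_k(a)−λ_s(a−1)−η/n)/θ(λ_k(a)−λ_s(a−1))]. -/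

import Mathlib

open Complex BigOperators Finset

/-- Theta function with characteristics `a, b`. -/
noncomputable def thetaCh (a b τ z : ℂ) : ℂ :=
  ∑' n : ℤ, Complex.exp ((Real.pi : ℂ) * Complex.I * ((n : ℂ) + a) ^ 2 * τ +
    2 * (Real.pi : ℂ) * Complex.I * ((n : ℂ) + a) * (z + b))

/-- The odd Jacobi theta function θ(z) = θ[1/2,1/2](z,τ). -/
noncomputable def th (τ z : ℂ) : ℂ := thetaCh (1/2) (1/2) τ z

/-- ζ(z) = θ'(z)/θ(z). -/
noncomputable def zeta (τ z : ℂ) : ℂ := deriv (th τ) z / th τ z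

/-- Φ_z(x) = θ(z+x)/(θ(z)θ(x)). -/
noncomputable def Phi (τ z x : ℂ) : ℂ := th τ (z + x) / (th τ z * th τ x)

/-- Membership in the lattice ℤ + τℤ. -/
def InLattice (τ w : ℂ) : Prop := ∃ m n : ℤ, w = (m : ℂ) + (n : ℂ) * τ

def negE : ℤ ≃ ℤ := ⟨fun m => -1 - m, fun m => -1 - m, fun m => by dsimp only; ring, fun m => by dsimp only; ring⟩

lemma th_odd (τ z : ℂ) : th τ (-z) = - th τ z := by
  unfold th thetaCh
  calc (∑' m : ℤ, Complex.exp ((Real.pi : ℂ) * Complex.I * ((m : ℂ) + 1/2) ^ 2 * τ +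
        2 * (Real.pi : ℂ) * Complex.I * ((m : ℂ) + 1/2) * (-z + 1/2)))
      = ∑' m : ℤ, Complex.exp ((Real.pi : ℂ) * Complex.I * (((negE m : ℤ) : ℂ) + 1/2) ^ 2 * τ +
        2 * (Real.pi : ℂ) * Complex.I * (((negE m : ℤ) : ℂ) + 1/2) * (-z + 1/2)) :=
        (Equiv.tsum_eq negE _).symm
    _ = ∑' m : ℤ, - Complex.exp ((Real.pi : ℂ) * Complex.I * ((m : ℂ) + 1/2) ^ 2 * τ +
        2 * (Real.pi : ℂ) * Complex.I * ((m : ℂ) + 1/2) * (z + 1/2)) := by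
        refine tsum_congr fun m => ?_
        have he : (negE m : ℤ) = -1 - m := rfl
        rw [he]
        push_cast
        have hA : (Real.pi : ℂ) * Complex.I * ((-1 - (m:ℂ)) + 1/2) ^ 2 * τ +
            2 * (Real.pi : ℂ) * Complex.I * ((-1 - (m:ℂ)) + 1/2) * (-z + 1/2)
            = ((Real.pi : ℂ) * Complex.I * ((m:ℂ) + 1/2) ^ 2 * τ +
              2 * (Real.pi : ℂ) * Complex.I * ((m:ℂ) + 1/2) * (z + 1/2))
              + ((-(m+1) : ℤ) : ℂ) * (2 * Real.pi * Complex.I) + Real.pi * Complex.I := by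
          push_cast; ring
        rw [hA, Complex.exp_add, Complex.exp_add, Complex.exp_int_mul_two_pi_mul_I,
          Complex.exp_pi_mul_I]
        ring
    _ = _ := tsum_neg

/-- The discrete-time Ruijsenaars–Schneider equation follows from the Bäcklund relations. -/
theorem discrete_RS_equation (τ : ℂ) (hτ : 0 < τ.im) (n : ℕ) (hn : 1 ≤ n) (η : ℂ)
    (lam : ℤ → Fin n → ℂ) (t : ℤ → Fin n → ℂ) (c : ℤ → ℂ)
    (hB1 : ∀ (a : ℤ) (k : Fin n), t a k =
      Complex.exp (c a) *
        ∏ s, th τ (lam a k - lam (a + 1) s + η / (n : ℂ)) / th τ (lam a k - lam (a + 1) s))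
    (hB2 : ∀ (a : ℤ) (k : Fin n), t (a + 1) k =
      Complex.exp (c a) *
        (∏ m ∈ Finset.univ.erase k,
            th τ (lam (a + 1) m - lam (a + 1) k - η / (n : ℂ)) /
              th τ (lam (a + 1) m - lam (a + 1) k + η / (n : ℂ))) *
        ∏ s, th τ (lam a s - lam (a + 1) k + η / (n : ℂ)) / th τ (lam a s - lam (a + 1) k))
    (hden1 : ∀ (a : ℤ) (k s : Fin n), th τ (lam a k - lam (a + 1) s) ≠ 0)
    (hden2 : ∀ (a : ℤ) (k s : Fin n), th τ (lam a k - lam (a + 1) s + η / (n : ℂ)) ≠ 0)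
    (hden3 : ∀ (a : ℤ) (m k : Fin n), m ≠ k →
      th τ (lam a m - lam a k + η / (n : ℂ)) ≠ 0 ∧
        th τ (lam a m - lam a k - η / (n : ℂ)) ≠ 0)
    (a : ℤ) (k : Fin n) :
    Complex.exp (c a - c (a - 1)) *
        ∏ m ∈ Finset.univ.erase k,
          th τ (lam a m - lam a k + η / (n : ℂ)) / th τ (lam a m - lam a k - η / (n : ℂ)) =
      ∏ s, (th τ (lam a k - lam (a + 1) s) / th τ (lam a k - lam (a + 1) s + η / (n : ℂ))) *
        (th τ (lam a k - lam (a - 1) s - η / (n : ℂ)) / th τ (lam a k - lam (a - 1) s)) := by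
  have hratio : ∀ u v : ℂ, th τ (-u) / th τ (-v) = th τ u / th τ v := by
    intro u v; rw [th_odd, th_odd, neg_div_neg_eq]
  have h1 := hB1 a k
  have h2 := hB2 (a - 1) k
  rw [sub_add_cancel] at h2
  have hC : (∏ s, th τ (lam (a-1) s - lam a k + η/(n:ℂ)) / th τ (lam (a-1) s - lam a k))
      = ∏ s, th τ (lam a k - lam (a-1) s - η/(n:ℂ)) / th τ (lam a k - lam (a-1) s) := by
    refine Finset.prod_congr rfl fun s _ => ?_
    rw [show lam (a-1) s - lam a k + η/(n:ℂ) = -(lam a k - lam (a-1) s - η/(n:ℂ)) by ring,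
        show lam (a-1) s - lam a k = -(lam a k - lam (a-1) s) by ring, hratio]
  rw [hC] at h2
  have key := h1.symm.trans h2
  -- notation
  set E1 := Complex.exp (c a) with hE1
  set E0 := Complex.exp (c (a-1)) with hE0
  have hE0ne : E0 ≠ 0 := Complex.exp_ne_zero _
  have hE1ne : E1 ≠ 0 := Complex.exp_ne_zero _
  rw [Complex.exp_sub, ← hE1, ← hE0]
  rw [Finset.prod_div_distrib] at key ⊢
  rw [Finset.prod_mul_distrib, Finset.prod_div_distrib, Finset.prod_div_distrib]
  rw [Finset.prod_div_distrib] at key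
  set PN1 := ∏ s, th τ (lam a k - lam (a+1) s + η/(n:ℂ)) with hPN1
  set PD1 := ∏ s, th τ (lam a k - lam (a+1) s) with hPD1
  set PN0 := ∏ s, th τ (lam a k - lam (a-1) s - η/(n:ℂ)) with hPN0
  set PD0 := ∏ s, th τ (lam a k - lam (a-1) s) with hPD0
  set Pp := ∏ m ∈ Finset.univ.erase k, th τ (lam a m - lam a k + η/(n:ℂ)) with hPp
  set Pm := ∏ m ∈ Finset.univ.erase k, th τ (lam a m - lam a k - η/(n:ℂ)) with hPm
  have hPN1ne : PN1 ≠ 0 := Finset.prod_ne_zero_iff.2 fun s _ => hden2 a k s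
  have hPD1ne : PD1 ≠ 0 := Finset.prod_ne_zero_iff.2 fun s _ => hden1 a k s
  have hPN0ne : PN0 ≠ 0 := by
    refine Finset.prod_ne_zero_iff.2 fun s _ => ?_
    have h := hden2 (a-1) s k
    rw [sub_add_cancel] at h
    rw [show lam a k - lam (a-1) s - η/(n:ℂ) = -(lam (a-1) s - lam a k + η/(n:ℂ)) by ring,
      th_odd]
    exact neg_ne_zero.2 h
  have hPD0ne : PD0 ≠ 0 := by
    refine Finset.prod_ne_zero_iff.2 fun s _ => ?_
    have h := hden1 (a-1) s k
    rw [sub_add_cancel] at h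
    rw [show lam a k - lam (a-1) s = -(lam (a-1) s - lam a k) by ring, th_odd]
    exact neg_ne_zero.2 h
  have hPpne : Pp ≠ 0 := Finset.prod_ne_zero_iff.2 fun m hm =>
    (hden3 a m k (Finset.mem_erase.1 hm).1).1
  have hPmne : Pm ≠ 0 := Finset.prod_ne_zero_iff.2 fun m hm =>
    (hden3 a m k (Finset.mem_erase.1 hm).1).2
  -- key : E1 * (PN1 / PD1) = E0 * (Pm / Pp) * (PN0 / PD0)
  field_simp at key ⊢
  rw [Finset.prod_div_distrib, ← hPN0, ← hPD0] at key
  linear_combination PD0 * key + PD1 * E0 * Pm * div_mul_cancel₀ PN0 hPD0ne
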